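/- arXiv:2102.10176 — 2 statements merged into one kernel-verified Lean document; each statement's English description precedes it below -/
import Mathlib

section
/- Let P_1, ..., P_M be probability densities and let P̃ = (1/M) ∑_{i=1}^M P_i be their centroid. Then at the optimal discriminator D*, the objective satisfies J(D*) = M log M − ∑_{i=1}^M KL(P_i ‖ P̃), where KL denotes the Kullback–Leibler divergence. -/
open MeasureTheory Real

/-!
Since the centroid is `(∑ⱼ Pⱼ) / M`, each `KL(Pᵢ ‖ P̃)` exceeds `∫ Pᵢ log (Pᵢ / ∑ⱼ Pⱼ)` by exactly
`log M · ∫ Pᵢ = log M`; summing over the `M` domains gives `M log M`.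
-/

theorem mul_log_div_div_const {p s c : ℝ} (hp : p ≠ 0) (hs : s ≠ 0) (hc : c ≠ 0) :
    p * log (p / (s / c)) = p * log (p / s) + p * log c := by
  rw [div_div_eq_mul_div, mul_div_right_comm, log_mul (div_ne_zero hp hs) hc, mul_add]

theorem integral_mul_log_div_div_const {Z : Type*} [MeasurableSpace Z] {μ : Measure Z}
    {p q : Z → ℝ} {c : ℝ} (hp : ∀ z, p z ≠ 0) (hq : ∀ z, q z ≠ 0) (hc : c ≠ 0)
    (hp_int : Integrable p μ) (hp_one : ∫ z, p z ∂μ = 1)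
    (h_int : Integrable (fun z => p z * log (p z / (q z / c))) μ) :
    ∫ z, p z * log (p z / (q z / c)) ∂μ = (∫ z, p z * log (p z / q z) ∂μ) + log c := by
  have h_pt : ∀ z, p z * log (p z / (q z / c)) = p z * log (p z / q z) + p z * log c :=
    fun z => mul_log_div_div_const (hp z) (hq z) hc
  have h_int' : Integrable (fun z => p z * log (p z / q z)) μ :=
    (h_int.sub (hp_int.mul_const (log c))).congr
      (.of_forall fun z => by simp only [Pi.sub_apply, h_pt, add_sub_cancel_right])
  simp_rw [h_pt]
  rw [integral_add h_int' (hp_int.mul_const _), integral_mul_const, hp_one, one_mul]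

theorem can_main_theorem_general
    {Z : Type*} [MeasurableSpace Z] (μ : Measure Z) (M : ℕ)
    (P : Fin M → Z → ℝ)
    (hPpos : ∀ i z, 0 < P i z)
    (hPprob : ∀ i, ∫ z, P i z ∂μ = 1)
    (hPint : ∀ i, Integrable (P i) μ)
    (hKLint : ∀ i,
      Integrable (fun z => P i z * Real.log (P i z / ((∑ j, P j z) / M))) μ) :
    (-∑ i, ∫ z, P i z * Real.log (P i z / ∑ j, P j z) ∂μ)
      = M * Real.log M
        - ∑ i, ∫ z, P i z * Real.log (P i z / ((∑ j, P j z) / M)) ∂μ := by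
  have h_sum_pos (i : Fin M) (z : Z) : 0 < ∑ j, P j z :=
    (hPpos i z).trans_le <|
      Finset.single_le_sum (fun j _ => (hPpos j z).le) (Finset.mem_univ i)
  have hM_ne_zero (i : Fin M) : (M : ℝ) ≠ 0 := Nat.cast_ne_zero.mpr (Fin.pos i).ne'
  have h_KL (i : Fin M) :=
    integral_mul_log_div_div_const (fun z => (hPpos i z).ne') (fun z => (h_sum_pos i z).ne')
      (hM_ne_zero i) (hPint i) (hPprob i) (hKLint i)
  rw [Finset.sum_congr rfl fun i _ => h_KL i, Finset.sum_add_distrib, Finset.sum_const,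
    Finset.card_univ, Fintype.card_fin, nsmul_eq_mul]
  ring

/-- At the optimal discriminator `D_i*(z) = P_i(z)/∑ j, P_j(z)`, the
objective `J(D*) = -∑ i, E_{z∼P_i}[log D_i*(z)]` equals
`M log M - ∑ i, KL(P_i ‖ P̃)`, where `P̃ = (1/M) ∑ i, P_i` is the centroid and
`KL(p ‖ q) = ∫ p log (p/q)`. -/
theorem can_main_theorem
    {Z : Type*} [MeasurableSpace Z] (μ : Measure Z) (M : ℕ) (hM : 0 < M)
    (P : Fin M → Z → ℝ)
    (hPmeas : ∀ i, Measurable (P i))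
    (hPpos : ∀ i z, 0 < P i z)
    (hPprob : ∀ i, ∫ z, P i z ∂μ = 1)
    (hPint : ∀ i, Integrable (P i) μ)
    (hKLint : ∀ i,
      Integrable (fun z => P i z * Real.log (P i z / ((∑ j, P j z) / M))) μ) :
    (-∑ i, ∫ z, P i z * Real.log (P i z / ∑ j, P j z) ∂μ)
      = M * Real.log M
        - ∑ i, ∫ z, P i z * Real.log (P i z / ((∑ j, P j z) / M)) ∂μ :=
  can_main_theorem_general μ M P hPpos hPprob hPint hKLint
end

section
/- Suppose in an M-domain adversarial game the discriminator is held at its optimum D*(·) as a function of the current densities. Then minimizing −J(D*) over (P_1,...,P_M), i.e., minimizing ∑_{i=1}^M KL(P_i ‖ P̃), is achieved exactly when all P_i are equal, and in that case the feature extractor's adversarial objective value is M log M. -/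
/-!
Pointwise, `p log (p / q) - (p - q) = q · klFun (p / q) ≥ 0`, with equality only where `p = q`.
Since `P i` and the centroid `P̃` both have mass one, `KL(P i ‖ P̃)` is the integral of this
nonnegative function, so it vanishes iff `P i = P̃` a.e. All `P i` equal `P̃` a.e. iff they agree
with each other, and then `P i / ∑ j, P j = 1 / M` a.e., which gives the value `M log M`.
-/

open MeasureTheory Real InformationTheory

section Gibbs

variable {Z : Type*} [MeasurableSpace Z] {μ : Measure Z} {p q : Z → ℝ}

lemma mul_log_div_sub_sub_eq_mul_klFun {a b : ℝ} (hb : b ≠ 0) :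
    a * log (a / b) - (a - b) = b * klFun (a / b) := by
  rw [klFun_apply]
  field_simp
  ring

lemma mul_klFun_div_eq_zero_iff {a b : ℝ} (ha : 0 ≤ a) (hb : 0 < b) :
    b * klFun (a / b) = 0 ↔ a = b := by
  rw [mul_eq_zero, klFun_eq_zero_iff (div_nonneg ha hb.le), div_eq_one_iff_eq hb.ne']
  simp [hb.ne']

lemma integral_mul_log_div_eq_integral_mul_klFun (hq : ∀ z, q z ≠ 0) (hp_int : Integrable p μ)
    (hq_int : Integrable q μ) (h_mass : ∫ z, p z ∂μ = ∫ z, q z ∂μ)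
    (h_int : Integrable (fun z => p z * log (p z / q z)) μ) :
    ∫ z, p z * log (p z / q z) ∂μ = ∫ z, q z * klFun (p z / q z) ∂μ := by
  simp_rw [← mul_log_div_sub_sub_eq_mul_klFun (hq _)]
  rw [integral_sub h_int (hp_int.sub' hq_int), integral_sub hp_int hq_int, h_mass, sub_self,
    sub_zero]

lemma integral_mul_log_div_nonneg (hp : ∀ z, 0 ≤ p z) (hq : ∀ z, 0 < q z)
    (hp_int : Integrable p μ) (hq_int : Integrable q μ) (h_mass : ∫ z, p z ∂μ = ∫ z, q z ∂μ)
    (h_int : Integrable (fun z => p z * log (p z / q z)) μ) :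
    0 ≤ ∫ z, p z * log (p z / q z) ∂μ := by
  rw [integral_mul_log_div_eq_integral_mul_klFun (fun z => (hq z).ne') hp_int hq_int h_mass h_int]
  exact integral_nonneg fun z => mul_nonneg (hq z).le (klFun_nonneg (div_nonneg (hp z) (hq z).le))

lemma integral_mul_log_div_eq_zero_iff (hp : ∀ z, 0 ≤ p z) (hq : ∀ z, 0 < q z)
    (hp_int : Integrable p μ) (hq_int : Integrable q μ) (h_mass : ∫ z, p z ∂μ = ∫ z, q z ∂μ)
    (h_int : Integrable (fun z => p z * log (p z / q z)) μ) :
    ∫ z, p z * log (p z / q z) ∂μ = 0 ↔ p =ᵐ[μ] q := by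
  have h_kl_int : Integrable (fun z => q z * klFun (p z / q z)) μ := by
    refine (h_int.sub (hp_int.sub' hq_int)).congr (.of_forall fun z => ?_)
    exact mul_log_div_sub_sub_eq_mul_klFun (hq z).ne'
  rw [integral_mul_log_div_eq_integral_mul_klFun (fun z => (hq z).ne') hp_int hq_int h_mass h_int,
    integral_eq_zero_iff_of_nonneg
      (fun z => mul_nonneg (hq z).le (klFun_nonneg (div_nonneg (hp z) (hq z).le))) h_kl_int]
  exact Filter.eventually_congr (.of_forall fun z => mul_klFun_div_eq_zero_iff (hp z) (hq z))

end Gibbs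

section Centroid

variable {Z ι : Type*} [Fintype ι]

noncomputable def centroid (P : ι → Z → ℝ) (z : Z) : ℝ :=
  (∑ j, P j z) / Fintype.card ι

variable {P : ι → Z → ℝ}

lemma centroid_pos [Nonempty ι] (hP : ∀ i z, 0 < P i z) (z : Z) : 0 < centroid P z :=
  div_pos (Finset.sum_pos (fun j _ => hP j z) Finset.univ_nonempty) (by simp [Fintype.card_pos])

lemma centroid_eq_of_forall_eq [Nonempty ι] {z : Z} {a : ℝ} (h : ∀ j, P j z = a) :
    centroid P z = a := by
  simp [centroid, h]

variable [MeasurableSpace Z] {μ : Measure Z}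

lemma integrable_centroid (hP : ∀ i, Integrable (P i) μ) : Integrable (centroid P) μ :=
  (integrable_finsetSum _ fun j _ => hP j).div_const _

lemma integral_centroid [Nonempty ι] (hP : ∀ i, ∫ z, P i z ∂μ = 1) :
    ∫ z, centroid P z ∂μ = 1 := by
  simp [centroid, integral_div,
    integral_finsetSum _ fun j _ => integrable_of_integral_eq_one (hP j), hP]

lemma forall_ae_eq_centroid_iff :
    (∀ i, P i =ᵐ[μ] centroid P) ↔ ∀ i j, P i =ᵐ[μ] P j := by
  refine ⟨fun h i j => (h i).trans (h j).symm, fun h i => ?_⟩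
  have : Nonempty ι := ⟨i⟩
  filter_upwards [ae_all_iff.2 (h i)] with z hz
  exact (centroid_eq_of_forall_eq fun j => (hz j).symm).symm

lemma integral_mul_log_div_sum_of_ae_eq_centroid {i : ι} (hP : ∀ z, 0 < P i z)
    (h_eq : P i =ᵐ[μ] centroid P) (h_prob : ∫ z, P i z ∂μ = 1) :
    ∫ z, P i z * log (P i z / ∑ j, P j z) ∂μ = -log (Fintype.card ι) := by
  have : Nonempty ι := ⟨i⟩
  have h_ratio : (fun z => P i z * log (P i z / ∑ j, P j z)) =ᵐ[μ]
      fun z => P i z * -log (Fintype.card ι) := by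
    filter_upwards [h_eq] with z hz
    have hsum : ∑ j, P j z = Fintype.card ι * P i z := by
      rw [hz, centroid]; field_simp
    rw [hsum, div_mul_cancel_right₀ (hP z).ne', log_inv]
  rw [integral_congr_ae h_ratio, integral_mul_const, h_prob, one_mul]

end Centroid

theorem can_equilibrium_general
    {Z : Type*} [MeasurableSpace Z] (μ : Measure Z) (M : ℕ)
    (P : Fin M → Z → ℝ)
    (hPpos : ∀ i z, 0 < P i z)
    (hPprob : ∀ i, ∫ z, P i z ∂μ = 1)
    (hKLint : ∀ i,
      Integrable (fun z => P i z * Real.log (P i z / ((∑ j, P j z) / M))) μ) :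
    (0 ≤ ∑ i, ∫ z, P i z * Real.log (P i z / ((∑ j, P j z) / M)) ∂μ) ∧
    ((∑ i, ∫ z, P i z * Real.log (P i z / ((∑ j, P j z) / M)) ∂μ) = 0 ↔
      ∀ i j, P i =ᵐ[μ] P j) ∧
    ((∀ i j, P i =ᵐ[μ] P j) →
      (-∑ i, ∫ z, P i z * Real.log (P i z / ∑ j, P j z) ∂μ) = M * Real.log M) := by
  have h_centroid : ∀ z, (∑ j, P j z) / (M : ℝ) = centroid P z := fun z => by simp [centroid]
  simp only [h_centroid] at hKLint ⊢
  have h_gibbs : ∀ i, 0 ≤ ∫ z, P i z * log (P i z / centroid P z) ∂μ ∧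
      (∫ z, P i z * log (P i z / centroid P z) ∂μ = 0 ↔ P i =ᵐ[μ] centroid P) := fun i => by
    have : Nonempty (Fin M) := ⟨i⟩
    have hp_int := integrable_of_integral_eq_one (hPprob i)
    have hq_int := integrable_centroid fun j => integrable_of_integral_eq_one (hPprob j)
    have h_mass : ∫ z, P i z ∂μ = ∫ z, centroid P z ∂μ := by rw [hPprob, integral_centroid hPprob]
    exact ⟨integral_mul_log_div_nonneg (fun z => (hPpos i z).le) (centroid_pos hPpos) hp_int
        hq_int h_mass (hKLint i),
      integral_mul_log_div_eq_zero_iff (fun z => (hPpos i z).le) (centroid_pos hPpos) hp_int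
        hq_int h_mass (hKLint i)⟩
  have h_nonneg : ∀ i ∈ Finset.univ, 0 ≤ ∫ z, P i z * log (P i z / centroid P z) ∂μ :=
    fun i _ => (h_gibbs i).1
  refine ⟨Finset.sum_nonneg h_nonneg, ?_, fun h_eq => ?_⟩
  · rw [Finset.sum_eq_zero_iff_of_nonneg h_nonneg, ← forall_ae_eq_centroid_iff]
    simp [(h_gibbs _).2]
  · rw [Finset.sum_congr rfl fun i _ => integral_mul_log_div_sum_of_ae_eq_centroid (hPpos i)
      (forall_ae_eq_centroid_iff.2 h_eq i) (hPprob i)]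
    simp

/-- Equilibrium of the CAN mini-max game with the discriminator held at its
optimum `D*`: minimizing `∑ i, KL(P_i ‖ P̃)` over the densities is achieved exactly when
all `P_i` coincide (a.e.), and in that case the adversarial objective value
`J(D*) = -∑ i, ∫ P_i log (P_i / ∑ j, P_j)` equals `M log M`. -/
theorem can_equilibrium
    {Z : Type*} [MeasurableSpace Z] (μ : Measure Z) (M : ℕ) (hM : 0 < M)
    (P : Fin M → Z → ℝ)
    (hPmeas : ∀ i, Measurable (P i))
    (hPpos : ∀ i z, 0 < P i z)
    (hPprob : ∀ i, ∫ z, P i z ∂μ = 1)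
    (hKLint : ∀ i,
      Integrable (fun z => P i z * Real.log (P i z / ((∑ j, P j z) / M))) μ) :
    (0 ≤ ∑ i, ∫ z, P i z * Real.log (P i z / ((∑ j, P j z) / M)) ∂μ) ∧
    ((∑ i, ∫ z, P i z * Real.log (P i z / ((∑ j, P j z) / M)) ∂μ) = 0 ↔
      ∀ i j, P i =ᵐ[μ] P j) ∧
    ((∀ i j, P i =ᵐ[μ] P j) →
      (-∑ i, ∫ z, P i z * Real.log (P i z / ∑ j, P j z) ∂μ) = M * Real.log M) :=
  can_equilibrium_general μ M P hPpos hPprob hKLint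
end
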